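/- arXiv:2507.15682 — 8 statements merged into one kernel-verified Lean document; each statement's English description precedes it below -/
import Mathlib

section
/- Suppose for each n, s^n = (s^n_A, s^n_B, s^n_C) ∈ S maximizes π(·, H_n, d_n) over S, where (H_n) is a sequence of Borel probability measures on ℝ² converging weakly to H and (d_n) is a sequence of reals converging to d. Then s^n_A → (1+d)/2, max{s^n_B, s^n_C} → (1−d)/2, and min{s^n_B, s^n_C} → 0; that is, the optimal offers converge (up to swapping the two non-proposers) to ((1+d)/2, (1−d)/2, 0). -/
open MeasureTheory Filter

noncomputable section

/-- The unit simplex of offers `(s_A, s_B, s_C)`. -/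
def SimplexS : Set (ℝ × ℝ × ℝ) :=
  {s | 0 ≤ s.1 ∧ 0 ≤ s.2.1 ∧ 0 ≤ s.2.2 ∧ s.1 + s.2.1 + s.2.2 = 1}

/-- Acceptance probability `Λ(b, c, G) = G({(τB, τC) : τB ≤ b or τC ≤ c})`. -/
def Lam (b c : ℝ) (G : Measure (ℝ × ℝ)) : ℝ :=
  (G {p : ℝ × ℝ | p.1 ≤ b ∨ p.2 ≤ c}).toReal

/-- Joint CDF `G(x, y) = G((−∞, x] × (−∞, y])`. -/
def jointCDF (G : Measure (ℝ × ℝ)) (x y : ℝ) : ℝ :=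
  (G (Set.Iic x ×ˢ Set.Iic y)).toReal

/-- Proposer's expected payoff `π(s, G, d) = d + (s_A − d)·Λ(s_B, s_C, G)`. -/
def pay (s : ℝ × ℝ × ℝ) (G : Measure (ℝ × ℝ)) (d : ℝ) : ℝ :=
  d + (s.1 - d) * Lam s.2.1 s.2.2 G

/-- Modified payoff `π̂(s, G, d) = d + max{s_A − d, 0}·Λ(s_B, s_C, G)`. -/
def payHat (s : ℝ × ℝ × ℝ) (G : Measure (ℝ × ℝ)) (d : ℝ) : ℝ :=
  d + max (s.1 - d) 0 * Lam s.2.1 s.2.2 G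

/-- The uniform distribution on `[0, τ]`. -/
def uniformIcc (τ : ℝ) : Measure ℝ :=
  (ENNReal.ofReal τ)⁻¹ • volume.restrict (Set.Icc 0 τ)

/-- Weak convergence of measures: convergence of integrals of all bounded continuous
functions. -/
def WeakLim (Hn : ℕ → Measure (ℝ × ℝ)) (H : Measure (ℝ × ℝ)) : Prop :=
  ∀ f : BoundedContinuousFunction (ℝ × ℝ) ℝ,
    Tendsto (fun n => ∫ p, f p ∂(Hn n)) atTop (nhds (∫ p, f p ∂H))

/-!
Write `V = d + (1 - d)² / (4τ)`. With uniform marginals on `[0, τ]`, inclusion–exclusion gives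
`τ Λ(b, c, H) ≤ b + c - τ H(m, m)` with `m = min b c`; completing the square in `u = s_A - d`
then shows that the modified payoff `π̂(s, H, d) = d + max(u, 0) Λ(s_B, s_C, H)` reaches `V` only
if `u = (1 - d)/2` and `H(m, m) = 0`, i.e. (Assumption 1) `m = 0`.

The maximizers `sⁿ` live in the compact simplex, so along any ultrafilter finer than `atTop` they
converge to some offer `s`. By the portmanteau theorem, closed sets make `π̂` upper semicontinuous
in the offer, the measure and `d` jointly, while open sets show that the fixed competitor offer
`((1 + d)/2, (1 - d)/2, 0)` eventually earns almost `V` under `Hₙ`. Optimality of `sⁿ` thus forces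
`π̂(s, H, d) ≥ V`, which pins down `s` up to swapping the non-proposers.
-/

open Set Topology

lemma uniformIcc_Iic {τ : ℝ} (hτ : 0 < τ) (b : ℝ) :
    uniformIcc τ (Iic b) = ENNReal.ofReal (min b τ / τ) := by
  have h : Iic b ∩ Icc 0 τ = Icc 0 (min b τ) := by
    ext x
    simp only [mem_inter_iff, mem_Iic, mem_Icc, le_min_iff]
    tauto
  rw [uniformIcc, Measure.smul_apply, Measure.restrict_apply measurableSet_Iic, h,
    Real.volume_Icc, smul_eq_mul, sub_zero, ENNReal.ofReal_div_of_pos hτ, div_eq_mul_inv, mul_comm]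

lemma uniformIcc_Iio {τ : ℝ} (hτ : 0 < τ) (b : ℝ) :
    uniformIcc τ (Iio b) = ENNReal.ofReal (min b τ / τ) := by
  rw [← uniformIcc_Iic hτ, uniformIcc, Measure.smul_apply, Measure.smul_apply,
    measure_congr Iio_ae_eq_Iic]

section Portmanteau

variable {ι Ω : Type*} {L : Filter ι} [MeasurableSpace Ω] [TopologicalSpace Ω]
  [OpensMeasurableSpace Ω] [HasOuterApproxClosed Ω]
  {μ : ProbabilityMeasure Ω} {μs : ι → ProbabilityMeasure Ω}

lemma MeasureTheory.ProbabilityMeasure.eventually_measureReal_lt_of_isClosed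
    (hμ : Tendsto μs L (𝓝 μ)) {F : Set Ω} (hF : IsClosed F) {r : ℝ}
    (hr : (μ : Measure Ω).real F < r) :
    ∀ᶠ i in L, (μs i : Measure Ω).real F < r := by
  have h : (μ : Measure Ω) F < ENNReal.ofReal r :=
    (ENNReal.lt_ofReal_iff_toReal_lt (measure_ne_top _ _)).mpr hr
  filter_upwards [eventually_lt_of_limsup_lt
    ((ProbabilityMeasure.limsup_measure_closed_le_of_tendsto hμ hF).trans_lt h)] with i hi
  exact ENNReal.toReal_lt_of_lt_ofReal hi

lemma MeasureTheory.ProbabilityMeasure.eventually_lt_measureReal_of_isOpen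
    (hμ : Tendsto μs L (𝓝 μ)) {G : Set Ω} (hG : IsOpen G) {r : ℝ}
    (hr : r < (μ : Measure Ω).real G) :
    ∀ᶠ i in L, r < (μs i : Measure Ω).real G := by
  rcases lt_or_ge r 0 with hr0 | hr0
  · exact Eventually.of_forall fun i => hr0.trans_le measureReal_nonneg
  have h : ENNReal.ofReal r < (μ : Measure Ω) G :=
    (ENNReal.ofReal_lt_iff_lt_toReal hr0 (measure_ne_top _ _)).mpr hr
  filter_upwards [eventually_lt_of_lt_liminf
    (h.trans_le (ProbabilityMeasure.le_liminf_measure_open_of_tendsto hμ hG))] with i hi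
  exact (ENNReal.ofReal_lt_iff_lt_toReal hr0 (measure_ne_top _ _)).mp hi

end Portmanteau

lemma exists_pos_measureReal_setOf_le_lt {Ω : Type*} [MeasurableSpace Ω] {μ : Measure Ω}
    [IsProbabilityMeasure μ] {f : Ω → ℝ} (hf : Measurable f) {r : ℝ}
    (hr : μ.real {x | f x ≤ 0} < r) : ∃ δ > 0, μ.real {x | f x ≤ δ} < r := by
  have := Measure.isProbabilityMeasure_map (μ := μ) hf.aemeasurable
  have hcdf (t : ℝ) : ProbabilityTheory.cdf (μ.map f) t = μ.real {x | f x ≤ t} := by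
    rw [ProbabilityTheory.cdf_eq_real, map_measureReal_apply hf measurableSet_Iic]; rfl
  have hright := ((ProbabilityTheory.cdf (μ.map f)).right_continuous 0).mono Ioi_subset_Ici_self
  rw [← hcdf] at hr
  obtain ⟨δ, hδr, hδ⟩ := ((hright.eventually (gt_mem_nhds hr)).and self_mem_nhdsWithin).exists
  exact ⟨δ, hδ, hcdf δ ▸ hδr⟩

lemma measureReal_preimage_Iic_of_map_eq_uniformIcc {α : Type*} [MeasurableSpace α]
    {μ : Measure α} {f : α → ℝ} (hf : Measurable f) {τ : ℝ} (hτ : 0 < τ)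
    (h : μ.map f = uniformIcc τ) {b : ℝ} (hb : 0 ≤ b) :
    μ.real (f ⁻¹' Iic b) = min b τ / τ := by
  rw [← map_measureReal_apply hf measurableSet_Iic, h, Measure.real, uniformIcc_Iic hτ,
    ENNReal.toReal_ofReal (by positivity)]

lemma measureReal_preimage_Iio_of_map_eq_uniformIcc {α : Type*} [MeasurableSpace α]
    {μ : Measure α} {f : α → ℝ} (hf : Measurable f) {τ : ℝ} (hτ : 0 < τ)
    (h : μ.map f = uniformIcc τ) {b : ℝ} (hb : 0 ≤ b) :
    μ.real (f ⁻¹' Iio b) = min b τ / τ := by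
  rw [← map_measureReal_apply hf measurableSet_Iio, h, Measure.real, uniformIcc_Iio hτ,
    ENNReal.toReal_ofReal (by positivity)]

lemma mul_Lam_le_of_map_eq_uniformIcc {τ : ℝ} (hτ : 0 < τ) {H : Measure (ℝ × ℝ)}
    [IsProbabilityMeasure H] (h₁ : H.map Prod.fst = uniformIcc τ)
    (h₂ : H.map Prod.snd = uniformIcc τ) {b c : ℝ} (hb : 0 ≤ b) (hc : 0 ≤ c) :
    τ * Lam b c H ≤ b + c - τ * jointCDF H (min b c) (min b c) := by
  set A : Set (ℝ × ℝ) := Prod.fst ⁻¹' Iic b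
  set B : Set (ℝ × ℝ) := Prod.snd ⁻¹' Iic c
  have hAB : H.real (A ∪ B) + H.real (A ∩ B) = H.real A + H.real B :=
    measureReal_union_add_inter (measurable_snd measurableSet_Iic)
  have hA : τ * H.real A ≤ b := by
    rw [measureReal_preimage_Iic_of_map_eq_uniformIcc measurable_fst hτ h₁ hb,
      mul_div_cancel₀ _ hτ.ne']
    exact min_le_left _ _
  have hB : τ * H.real B ≤ c := by
    rw [measureReal_preimage_Iic_of_map_eq_uniformIcc measurable_snd hτ h₂ hc,
      mul_div_cancel₀ _ hτ.ne']
    exact min_le_left _ _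
  have hJ : jointCDF H (min b c) (min b c) ≤ H.real (A ∩ B) :=
    measureReal_mono (prod_mono (Iic_subset_Iic.mpr (min_le_left b c))
      (Iic_subset_Iic.mpr (min_le_right b c)))
  have hΛ : Lam b c H = H.real (A ∪ B) := rfl
  nlinarith

/-- `d + (1 - d)² / (4τ)` is the optimal payoff under `H`, attained at
`((1 + d)/2, (1 - d)/2, 0)`. -/
lemma eq_of_le_payHat {τ : ℝ} (hτ : 0 < τ) {H : Measure (ℝ × ℝ)} [IsProbabilityMeasure H]
    (h₁ : H.map Prod.fst = uniformIcc τ) (h₂ : H.map Prod.snd = uniformIcc τ)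
    (hH : ∀ x > (0 : ℝ), 0 < jointCDF H x x) {d : ℝ} (hd : d < 1)
    {s : ℝ × ℝ × ℝ} (hs : s ∈ SimplexS) (hle : d + (1 - d) ^ 2 / (4 * τ) ≤ payHat s H d) :
    s.1 = (1 + d) / 2 ∧ max s.2.1 s.2.2 = (1 - d) / 2 ∧ min s.2.1 s.2.2 = 0 := by
  obtain ⟨-, hb, hc, hsum⟩ := hs
  set u := s.1 - d
  set J := jointCDF H (min s.2.1 s.2.2) (min s.2.1 s.2.2)
  have hJ0 : 0 ≤ J := ENNReal.toReal_nonneg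
  have hΛ0 : 0 ≤ Lam s.2.1 s.2.2 H := ENNReal.toReal_nonneg
  have hV : 0 < (1 - d) ^ 2 / (4 * τ) := by positivity
  have hu : 0 < u := by
    by_contra! hu
    rw [payHat, max_eq_right hu, zero_mul] at hle
    linarith
  rw [payHat, max_eq_left hu.le] at hle
  have hle' : (1 - d) ^ 2 ≤ u * Lam s.2.1 s.2.2 H * (4 * τ) :=
    (div_le_iff₀ (by positivity)).mp (by linarith)
  have hΛ := mul_Lam_le_of_map_eq_uniformIcc hτ h₁ h₂ hb hc
  -- completing the square in `u`
  have hsq : (2 * u - (1 - d)) ^ 2 + 4 * u * (τ * J) ≤ 0 := by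
    nlinarith [mul_le_mul_of_nonneg_left hΛ hu.le]
  have huJ : 0 ≤ u * (τ * J) := by positivity
  have hJ : J = 0 := by
    nlinarith [sq_nonneg (2 * u - (1 - d)), mul_pos hu hτ]
  have hu' : u = (1 - d) / 2 := by nlinarith [sq_nonneg (2 * u - (1 - d))]
  have hmin : min s.2.1 s.2.2 = 0 := by
    by_contra hne
    exact (hH _ (lt_of_le_of_ne (le_min hb hc) (Ne.symm hne))).ne' hJ
  refine ⟨by linarith, ?_, hmin⟩
  linarith [min_add_max s.2.1 s.2.2]

section Limits

variable {ι : Type*} {L : Filter ι} {μ : ProbabilityMeasure (ℝ × ℝ)}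
  {μs : ι → ProbabilityMeasure (ℝ × ℝ)}

lemma eventually_Lam_lt (hμ : Tendsto μs L (𝓝 μ)) {b c : ι → ℝ} {b₀ c₀ : ℝ}
    (hb : Tendsto b L (𝓝 b₀)) (hc : Tendsto c L (𝓝 c₀)) {r : ℝ} (hr : Lam b₀ c₀ μ < r) :
    ∀ᶠ i in L, Lam (b i) (c i) (μs i) < r := by
  set f : ℝ × ℝ → ℝ := fun p => min (p.1 - b₀) (p.2 - c₀)
  have hf : Continuous f := by fun_prop
  have hsublevel (δ : ℝ) :
      {p : ℝ × ℝ | f p ≤ δ} = {p | p.1 ≤ b₀ + δ ∨ p.2 ≤ c₀ + δ} := by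
    ext p
    simp only [f, mem_ofPred_eq, min_le_iff, sub_le_iff_le_add']
  obtain ⟨δ, hδ, hδr⟩ := exists_pos_measureReal_setOf_le_lt hf.measurable
    (μ := (μ : Measure (ℝ × ℝ))) (by rwa [hsublevel, add_zero, add_zero])
  have hclosed : IsClosed {p : ℝ × ℝ | f p ≤ δ} := isClosed_le hf continuous_const
  filter_upwards [ProbabilityMeasure.eventually_measureReal_lt_of_isClosed hμ hclosed hδr,
    hb.eventually (gt_mem_nhds (lt_add_of_pos_right b₀ hδ)),
    hc.eventually (gt_mem_nhds (lt_add_of_pos_right c₀ hδ))] with i hi hbi hci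
  refine lt_of_le_of_lt (measureReal_mono ?_) hi
  rw [hsublevel]
  rintro p (hp | hp)
  · exact Or.inl (by linarith)
  · exact Or.inr (by linarith)

lemma eventually_lt_Lam (hμ : Tendsto μs L (𝓝 μ)) {b c r : ℝ}
    (hr : r < (μ : Measure (ℝ × ℝ)).real {p | p.1 < b ∨ p.2 < c}) :
    ∀ᶠ i in L, r < Lam b c (μs i) := by
  have hopen : IsOpen {p : ℝ × ℝ | p.1 < b ∨ p.2 < c} :=
    (isOpen_lt continuous_fst continuous_const).union (isOpen_lt continuous_snd continuous_const)
  filter_upwards [ProbabilityMeasure.eventually_lt_measureReal_of_isOpen hμ hopen hr] with i hi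
  exact hi.trans_le (measureReal_mono fun p hp => hp.imp le_of_lt le_of_lt)

lemma pay_le_payHat (s : ℝ × ℝ × ℝ) (G : Measure (ℝ × ℝ)) (d : ℝ) :
    pay s G d ≤ payHat s G d := by
  unfold pay payHat
  gcongr
  · exact ENNReal.toReal_nonneg
  · exact le_max_left _ _

lemma eventually_payHat_lt (hμ : Tendsto μs L (𝓝 μ)) {s : ι → ℝ × ℝ × ℝ} {s₀ : ℝ × ℝ × ℝ}
    {d : ι → ℝ} {d₀ : ℝ} (hs : Tendsto s L (𝓝 s₀)) (hd : Tendsto d L (𝓝 d₀)) {r : ℝ}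
    (hr : payHat s₀ μ d₀ < r) :
    ∀ᶠ i in L, payHat (s i) (μs i) (d i) < r := by
  set m₀ := max (s₀.1 - d₀) 0
  have hcont : Tendsto (fun l => d₀ + m₀ * l) (𝓝[>] (Lam s₀.2.1 s₀.2.2 μ))
      (𝓝 (payHat s₀ μ d₀)) :=
    ((continuous_const.add (continuous_const.mul continuous_id)).tendsto _).mono_left
      nhdsWithin_le_nhds
  obtain ⟨l, hlr, hl⟩ := ((hcont.eventually (gt_mem_nhds hr)).and self_mem_nhdsWithin).exists
  have hlim : Tendsto (fun i => d i + max ((s i).1 - d i) 0 * l) L (𝓝 (d₀ + m₀ * l)) :=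
    hd.add (((hs.fst_nhds.sub hd).max tendsto_const_nhds).mul_const l)
  filter_upwards [eventually_Lam_lt hμ hs.snd_nhds.fst_nhds hs.snd_nhds.snd_nhds hl,
    hlim.eventually (gt_mem_nhds hlr)] with i hΛ hi
  refine lt_of_le_of_lt ?_ hi
  unfold payHat
  gcongr

lemma eventually_lt_pay (hμ : Tendsto μs L (𝓝 μ)) {s : ℝ × ℝ × ℝ} {d : ι → ℝ} {d₀ : ℝ}
    (hd : Tendsto d L (𝓝 d₀)) (hsd : d₀ < s.1) {r : ℝ}
    (hr : r < d₀ + (s.1 - d₀) * (μ : Measure (ℝ × ℝ)).real {p | p.1 < s.2.1 ∨ p.2 < s.2.2}) :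
    ∀ᶠ i in L, r < pay s (μs i) (d i) := by
  set G := (μ : Measure (ℝ × ℝ)).real {p | p.1 < s.2.1 ∨ p.2 < s.2.2}
  have hcont : Tendsto (fun l => d₀ + (s.1 - d₀) * l) (𝓝[<] G) (𝓝 (d₀ + (s.1 - d₀) * G)) :=
    ((continuous_const.add (continuous_const.mul continuous_id)).tendsto _).mono_left
      nhdsWithin_le_nhds
  obtain ⟨l, hrl, hl⟩ := ((hcont.eventually (lt_mem_nhds hr)).and self_mem_nhdsWithin).exists
  have hlim : Tendsto (fun i => d i + (s.1 - d i) * l) L (𝓝 (d₀ + (s.1 - d₀) * l)) :=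
    hd.add ((tendsto_const_nhds.sub hd).mul_const l)
  filter_upwards [eventually_lt_Lam hμ hl, hlim.eventually (lt_mem_nhds hrl),
    hd.eventually (gt_mem_nhds hsd)] with i hΛ hi hdi
  refine hi.trans_le ?_
  unfold pay
  gcongr

lemma le_payHat_of_tendsto_maximizers [L.NeBot] {τ : ℝ} (hτ : 1 / 2 ≤ τ)
    (h₁ : (μ : Measure (ℝ × ℝ)).map Prod.fst = uniformIcc τ) {d₀ : ℝ} (hd₀ : 0 ≤ d₀)
    (hd₁ : d₀ < 1) (hμ : Tendsto μs L (𝓝 μ)) {d : ι → ℝ} (hd : Tendsto d L (𝓝 d₀))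
    {s : ι → ℝ × ℝ × ℝ} (hmax : ∀ i, ∀ t ∈ SimplexS, pay t (μs i) (d i) ≤ pay (s i) (μs i) (d i))
    {s₀ : ℝ × ℝ × ℝ} (hs : Tendsto s L (𝓝 s₀)) :
    d₀ + (1 - d₀) ^ 2 / (4 * τ) ≤ payHat s₀ μ d₀ := by
  have hτ₀ : 0 < τ := by linarith
  -- Otherwise the maximizers would eventually earn less than the competitor `(1 - b, b, 0)`.
  by_contra! hlt
  set b := (1 - d₀) / 2 with hb
  set r := (payHat s₀ μ d₀ + (d₀ + (1 - d₀) ^ 2 / (4 * τ))) / 2 with hr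
  have hcomp : ((1 - b, b, 0) : ℝ × ℝ × ℝ) ∈ SimplexS :=
    ⟨show 0 ≤ 1 - b by linarith, show 0 ≤ b by linarith, le_rfl, show 1 - b + b + 0 = 1 by ring⟩
  have hacc : b / τ ≤ (μ : Measure (ℝ × ℝ)).real {p | p.1 < b ∨ p.2 < 0} := by
    have h := measureReal_preimage_Iio_of_map_eq_uniformIcc measurable_fst hτ₀ h₁ (b := b)
      (by linarith)
    rw [min_eq_left (by linarith)] at h
    exact h ▸ measureReal_mono fun p hp => Or.inl hp
  have hrV : r < d₀ + (1 - b - d₀) * (μ : Measure (ℝ × ℝ)).real {p | p.1 < b ∨ p.2 < 0} :=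
    calc r < d₀ + (1 - d₀) ^ 2 / (4 * τ) := by linarith
      _ = d₀ + (1 - b - d₀) * (b / τ) := by field_simp; ring
      _ ≤ _ := by gcongr; linarith
  obtain ⟨i, hlow, hup⟩ := ((eventually_lt_pay (s := (1 - b, b, 0)) hμ hd
    (show d₀ < 1 - b by linarith) hrV).and
    (eventually_payHat_lt hμ hs hd (r := r) (by linarith))).exists
  linarith [hmax i _ hcomp, pay_le_payHat (s i) (μs i) (d i)]

end Limits

lemma isCompact_simplexS : IsCompact SimplexS := by
  have hclosed : IsClosed SimplexS :=
    (isClosed_le continuous_const continuous_fst).inter <|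
      (isClosed_le continuous_const continuous_snd.fst).inter <|
        (isClosed_le continuous_const continuous_snd.snd).inter <|
          isClosed_eq ((continuous_fst.add continuous_snd.fst).add continuous_snd.snd)
            continuous_const
  refine (isCompact_Icc (a := 0) (b := 1)).of_isClosed_subset hclosed ?_
  rintro ⟨a, b, c⟩ ⟨ha, hb, hc, hsum⟩
  exact ⟨⟨ha, hb, hc⟩, show a ≤ 1 by linarith, show b ≤ 1 by linarith, show c ≤ 1 by linarith⟩

theorem stmt0_general
    (τ : ℝ) (hτ : 1 / 2 ≤ τ)
    (H : Measure (ℝ × ℝ)) (hHprob : IsProbabilityMeasure H)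
    (hmarg1 : H.map Prod.fst = uniformIcc τ)
    (hmarg2 : H.map Prod.snd = uniformIcc τ)
    (hA1 : ∀ x > (0 : ℝ), 0 < jointCDF H x x)
    (d : ℝ) (hd0 : 0 ≤ d) (hd1 : d < 1)
    (Hn : ℕ → Measure (ℝ × ℝ)) (hHnprob : ∀ n, IsProbabilityMeasure (Hn n))
    (hweak : WeakLim Hn H)
    (dn : ℕ → ℝ) (hdn : Tendsto dn atTop (nhds d))
    (sn : ℕ → ℝ × ℝ × ℝ)
    (hsn : ∀ n, sn n ∈ SimplexS)
    (hmax : ∀ n, ∀ s ∈ SimplexS, pay s (Hn n) (dn n) ≤ pay (sn n) (Hn n) (dn n)) :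
    Tendsto (fun n => (sn n).1) atTop (nhds ((1 + d) / 2)) ∧
    Tendsto (fun n => max (sn n).2.1 (sn n).2.2) atTop (nhds ((1 - d) / 2)) ∧
    Tendsto (fun n => min (sn n).2.1 (sn n).2.2) atTop (nhds 0) := by
  let P : ProbabilityMeasure (ℝ × ℝ) := ⟨H, hHprob⟩
  let Ps : ℕ → ProbabilityMeasure (ℝ × ℝ) := fun n => ⟨Hn n, hHnprob n⟩
  have hPs : Tendsto Ps atTop (𝓝 P) :=
    ProbabilityMeasure.tendsto_iff_forall_integral_tendsto.mpr hweak
  let g : ℝ × ℝ × ℝ → ℝ × ℝ × ℝ := fun s => (s.1, max s.2.1 s.2.2, min s.2.1 s.2.2)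
  suffices h : Tendsto (g ∘ sn) atTop (𝓝 ((1 + d) / 2, (1 - d) / 2, 0)) from
    ⟨h.fst_nhds, h.snd_nhds.fst_nhds, h.snd_nhds.snd_nhds⟩
  refine (tendsto_iff_ultrafilter _ _ _).mpr fun U hU => ?_
  obtain ⟨s₀, hs₀, hlim⟩ :=
    isCompact_simplexS.ultrafilter_le_nhds' (U.map sn) (Ultrafilter.mem_map.mpr (univ_mem' hsn))
  have hle := le_payHat_of_tendsto_maximizers (μ := P) hτ hmarg1 hd0 hd1 (hPs.mono_left hU)
    (hdn.mono_left hU) hmax hlim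
  obtain ⟨h₁, h₂, h₃⟩ := eq_of_le_payHat (by linarith) hmarg1 hmarg2 hA1 hd1 hs₀ hle
  have hg : Continuous g := by fun_prop
  simpa only [g, h₁, h₂, h₃] using (hg.tendsto s₀).comp hlim

theorem stmt0
    (τ : ℝ) (hτ : 1 / 2 ≤ τ)
    (H : Measure (ℝ × ℝ)) (hHprob : IsProbabilityMeasure H)
    (hconc : H ((Set.Icc (0 : ℝ) τ ×ˢ Set.Icc (0 : ℝ) τ)ᶜ) = 0)
    (hmarg1 : H.map Prod.fst = uniformIcc τ)
    (hmarg2 : H.map Prod.snd = uniformIcc τ)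
    (hA1 : ∀ x > (0 : ℝ), 0 < jointCDF H x x)
    (d : ℝ) (hd0 : 0 ≤ d) (hd1 : d < 1)
    (Hn : ℕ → Measure (ℝ × ℝ)) (hHnprob : ∀ n, IsProbabilityMeasure (Hn n))
    (hweak : WeakLim Hn H)
    (dn : ℕ → ℝ) (hdn : Tendsto dn atTop (nhds d))
    (sn : ℕ → ℝ × ℝ × ℝ)
    (hsn : ∀ n, sn n ∈ SimplexS)
    (hmax : ∀ n, ∀ s ∈ SimplexS, pay s (Hn n) (dn n) ≤ pay (sn n) (Hn n) (dn n)) :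
    Tendsto (fun n => (sn n).1) atTop (nhds ((1 + d) / 2)) ∧
    Tendsto (fun n => max (sn n).2.1 (sn n).2.2) atTop (nhds ((1 - d) / 2)) ∧
    Tendsto (fun n => min (sn n).2.1 (sn n).2.2) atTop (nhds 0) :=
  stmt0_general τ hτ H hHprob hmarg1 hmarg2 hA1 d hd0 hd1 Hn hHnprob hweak dn hdn sn hsn hmax
end
end

section
/- Let G be a Borel probability measure on ℝ² and d < 1 a real number, and suppose there exists x with 0 < x < (1−d)/2 such that the joint CDF satisfies G(x, x) > 0. Then for every offer s ∈ S with s_A ≤ d there exists an offer s' ∈ S with s'_A > d such that π(s', G, d) > π(s, G, d). -/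
open MeasureTheory Filter

noncomputable section

theorem stmt1
    (G : Measure (ℝ × ℝ)) (hGprob : IsProbabilityMeasure G)
    (d : ℝ) (hd : d < 1)
    (hx : ∃ x : ℝ, 0 < x ∧ x < (1 - d) / 2 ∧ 0 < jointCDF G x x)
    (s : ℝ × ℝ × ℝ) (hs : s ∈ SimplexS) (hsA : s.1 ≤ d) :
    ∃ s' ∈ SimplexS, d < s'.1 ∧ pay s G d < pay s' G d := by
  obtain ⟨x, hx0, hxlt, hxcdf⟩ := hx
  have hd0 : 0 ≤ d := le_trans hs.1 hsA
  have hdx : d < 1 - 2 * x := by linarith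
  refine ⟨(1 - 2 * x, x, x), ⟨show (0:ℝ) ≤ 1 - 2*x by linarith, hx0.le, hx0.le, show 1 - 2*x + x + x = 1 by ring⟩, hdx, ?_⟩
  -- Λ(x, x) ≥ jointCDF G x x > 0
  have hsub : Set.Iic x ×ˢ Set.Iic x ⊆ {p : ℝ × ℝ | p.1 ≤ x ∨ p.2 ≤ x} := by
    intro p hp; exact Or.inl hp.1
  have hfin : G {p : ℝ × ℝ | p.1 ≤ x ∨ p.2 ≤ x} ≠ ⊤ :=
    (measure_lt_top G _).ne
  have hLam : 0 < Lam x x G := by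
    have h1 : jointCDF G x x ≤ Lam x x G :=
      ENNReal.toReal_mono hfin (measure_mono hsub)
    linarith
  have hLam0 : 0 ≤ Lam s.2.1 s.2.2 G := ENNReal.toReal_nonneg
  have h2 : (s.1 - d) * Lam s.2.1 s.2.2 G ≤ 0 :=
    mul_nonpos_of_nonpos_of_nonneg (by linarith) hLam0
  have h3 : 0 < (1 - 2 * x - d) * Lam x x G :=
    mul_pos (by linarith) hLam
  simp only [pay]
  linarith
end
end

section
/- For any Borel probability measure G on ℝ² and any d ∈ ℝ, the modified payoff function s ↦ π̂(s, G, d) is upper semicontinuous on the unit simplex S. -/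
open MeasureTheory Filter

noncomputable section

lemma lam_mono (G : Measure (ℝ × ℝ)) [IsProbabilityMeasure G] {b b' c c' : ℝ}
    (hb : b ≤ b') (hc : c ≤ c') : Lam b c G ≤ Lam b' c' G := by
  refine ENNReal.toReal_mono (measure_ne_top G _) (measure_mono ?_)
  intro p hp
  rcases hp with h | h
  · exact Or.inl (h.trans hb)
  · exact Or.inr (h.trans hc)

lemma lam_nonneg (G : Measure (ℝ × ℝ)) (b c : ℝ) : 0 ≤ Lam b c G :=
  ENNReal.toReal_nonneg

lemma lam_right_cont (G : Measure (ℝ × ℝ)) [IsProbabilityMeasure G] (b c : ℝ)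
    {y : ℝ} (hy : Lam b c G < y) : ∃ δ > 0, Lam (b + δ) (c + δ) G < y := by
  set A : ℕ → Set (ℝ × ℝ) := fun n => {p | p.1 ≤ b + 1 / (n + 1) ∨ p.2 ≤ c + 1 / (n + 1)}
  have hmeas : ∀ n, MeasurableSet (A n) := fun n =>
    (measurableSet_le measurable_fst measurable_const).union
      (measurableSet_le measurable_snd measurable_const)
  have hanti : Antitone A := by
    intro n m hnm p hp
    have h1 : (1 : ℝ) / (m + 1) ≤ 1 / (n + 1) := by
      apply one_div_le_one_div_of_le
      · positivity
      · exact_mod_cast Nat.succ_le_succ hnm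
    rcases hp with h | h
    · exact Or.inl (h.trans (by linarith))
    · exact Or.inr (h.trans (by linarith))
  have hiInter : ⋂ n, A n = {p : ℝ × ℝ | p.1 ≤ b ∨ p.2 ≤ c} := by
    ext p
    simp only [Set.mem_iInter, A, Set.mem_setOf_eq]
    constructor
    · intro h
      by_contra hc'
      push_neg at hc'
      obtain ⟨n, hn⟩ := exists_nat_one_div_lt (lt_min (sub_pos.2 hc'.1) (sub_pos.2 hc'.2))
      rcases h n with h' | h'
      · have := lt_of_lt_of_le hn (min_le_left _ _)
        linarith
      · have := lt_of_lt_of_le hn (min_le_right _ _)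
        linarith
    · intro h n
      rcases h with h | h
      · refine Or.inl (h.trans ?_)
        have : (0:ℝ) < 1 / (n + 1) := by positivity
        linarith
      · refine Or.inr (h.trans ?_)
        have : (0:ℝ) < 1 / (n + 1) := by positivity
        linarith
  have htend : Tendsto (fun n => G (A n)) atTop (nhds (G {p : ℝ × ℝ | p.1 ≤ b ∨ p.2 ≤ c})) := by
    rw [← hiInter]
    exact tendsto_measure_iInter_atTop (fun n => (hmeas n).nullMeasurableSet) hanti ⟨0, measure_ne_top G _⟩
  have htend' : Tendsto (fun n => (G (A n)).toReal) atTop (nhds (Lam b c G)) :=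
    (ENNReal.tendsto_toReal (measure_ne_top G _)).comp htend
  have hev : ∀ᶠ n in atTop, (G (A n)).toReal < y :=
    htend'.eventually (Filter.Tendsto.eventually_lt_const hy tendsto_id)
  obtain ⟨n, hn⟩ := hev.exists
  exact ⟨1 / (n + 1), by positivity, hn⟩

theorem stmt6
    (G : Measure (ℝ × ℝ)) (hGprob : IsProbabilityMeasure G) (d : ℝ) :
    UpperSemicontinuousOn (fun s : ℝ × ℝ × ℝ => payHat s G d) SimplexS := by
  intro s₀ _ y hy
  set M := max (s₀.1 - d) 0 with hM
  set L := Lam s₀.2.1 s₀.2.2 G with hL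
  have hMnn : 0 ≤ M := le_max_right _ _
  have hLnn : 0 ≤ L := lam_nonneg G _ _
  have hy' : M * L < y - d := by
    simp only [payHat] at hy; linarith
  set ε : ℝ := min 1 ((y - d - M * L) / (2 * (M + L + 1))) with hε
  have hεpos : 0 < ε := by
    apply lt_min one_pos
    apply div_pos (by linarith) (by positivity)
  have hε1 : ε ≤ 1 := min_le_left _ _
  have hε2 : ε ≤ (y - d - M * L) / (2 * (M + L + 1)) := min_le_right _ _
  have hkey : (M + ε) * (L + ε) < y - d := by
    have h2 : ε * (2 * (M + L + 1)) ≤ y - d - M * L := by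
      rw [← le_div_iff₀ (by positivity : (0:ℝ) < 2 * (M + L + 1))]
      exact hε2
    nlinarith
  obtain ⟨δ, hδpos, hδ⟩ := lam_right_cont G s₀.2.1 s₀.2.2
    (show L < L + ε by linarith)
  -- eventually bounds
  have h1 : ∀ᶠ s : ℝ × ℝ × ℝ in nhds s₀, max (s.1 - d) 0 < M + ε := by
    have hopen : IsOpen {s : ℝ × ℝ × ℝ | max (s.1 - d) 0 < M + ε} :=
      isOpen_lt (((continuous_fst.sub continuous_const).max continuous_const))
        continuous_const
    exact hopen.mem_nhds (by simp only [Set.mem_setOf_eq]; linarith)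
  have h2 : ∀ᶠ s : ℝ × ℝ × ℝ in nhds s₀, s.2.1 < s₀.2.1 + δ := by
    have hopen : IsOpen {s : ℝ × ℝ × ℝ | s.2.1 < s₀.2.1 + δ} :=
      isOpen_lt (continuous_snd.fst) continuous_const
    exact hopen.mem_nhds (by simp only [Set.mem_setOf_eq]; linarith)
  have h3 : ∀ᶠ s : ℝ × ℝ × ℝ in nhds s₀, s.2.2 < s₀.2.2 + δ := by
    have hopen : IsOpen {s : ℝ × ℝ × ℝ | s.2.2 < s₀.2.2 + δ} :=
      isOpen_lt (continuous_snd.snd) continuous_const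
    exact hopen.mem_nhds (by simp only [Set.mem_setOf_eq]; linarith)
  have hall := (h1.and (h2.and h3)).filter_mono (nhdsWithin_le_nhds : nhdsWithin s₀ SimplexS ≤ nhds s₀)
  refine hall.mono ?_
  rintro s ⟨hs1, hs2, hs3⟩
  have hlam : Lam s.2.1 s.2.2 G ≤ Lam (s₀.2.1 + δ) (s₀.2.2 + δ) G :=
    lam_mono G hs2.le hs3.le
  have hlamnn : 0 ≤ Lam s.2.1 s.2.2 G := lam_nonneg G _ _
  have hmaxnn : (0:ℝ) ≤ max (s.1 - d) 0 := le_max_right _ _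
  have : max (s.1 - d) 0 * Lam s.2.1 s.2.2 G ≤ (M + ε) * (L + ε) := by
    apply mul_le_mul hs1.le (hlam.trans hδ.le) hlamnn (by linarith)
  simp only [payHat]
  linarith
end
end

section
/- Let G be a Borel probability measure on ℝ² and d < 1 a real number, and suppose there exists x with 0 < x < (1−d)/2 such that the joint CDF satisfies G(x, x) > 0. Then an offer s ∈ S maximizes π(·, G, d) over S if and only if it maximizes the modified payoff π̂(·, G, d) over S. -/
open MeasureTheory Filter

noncomputable section

lemma Lam_nonneg (b c : ℝ) (G : Measure (ℝ × ℝ)) : 0 ≤ Lam b c G :=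
  ENNReal.toReal_nonneg

lemma payHat_eq_max (s : ℝ × ℝ × ℝ) (G : Measure (ℝ × ℝ)) (d : ℝ) :
    payHat s G d = max (pay s G d) d := by
  have hL := Lam_nonneg s.2.1 s.2.2 G
  unfold payHat pay
  rw [max_mul_of_nonneg _ _ hL, zero_mul]
  rw [← max_add_add_left, add_zero]

lemma jointCDF_le_Lam (G : Measure (ℝ × ℝ)) [IsProbabilityMeasure G] (x c : ℝ) :
    jointCDF G x x ≤ Lam x c G := by
  apply ENNReal.toReal_mono (measure_ne_top G _)
  apply measure_mono
  rintro ⟨a, b⟩ ⟨ha, hb⟩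
  exact Or.inl ha

theorem stmt8
    (G : Measure (ℝ × ℝ)) (hGprob : IsProbabilityMeasure G)
    (d : ℝ) (hd : d < 1)
    (hx : ∃ x : ℝ, 0 < x ∧ x < (1 - d) / 2 ∧ 0 < jointCDF G x x)
    (s : ℝ × ℝ × ℝ) (hs : s ∈ SimplexS) :
    (∀ s' ∈ SimplexS, pay s' G d ≤ pay s G d) ↔
      (∀ s' ∈ SimplexS, payHat s' G d ≤ payHat s G d) := by
  obtain ⟨x, hx0, hx1, hxc⟩ := hx
  -- a candidate offer with payoff strictly above d when d > 0
  by_cases hd0 : d ≤ 0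
  · -- for all offers in the simplex, s.1 - d ≥ 0, so pay = payHat
    have heq : ∀ s' ∈ SimplexS, pay s' G d = payHat s' G d := by
      intro s' hs'
      unfold pay payHat
      rw [max_eq_left (by linarith [hs'.1])]
    constructor
    · intro h s' hs'
      rw [← heq s' hs', ← heq s hs]; exact h s' hs'
    · intro h s' hs'
      rw [heq s' hs', heq s hs]; exact h s' hs'
  · push_neg at hd0
    have hx1' : x < 1 - d := by nlinarith
    set a : ℝ := (d + (1 - x)) / 2 with ha
    have had : d < a := by simp only [ha]; linarith
    have hax : a + x < 1 := by simp only [ha]; linarith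
    have hsstar : ((a, x, 1 - a - x) : ℝ × ℝ × ℝ) ∈ SimplexS := by
      refine ⟨by simp only [ha]; linarith, le_of_lt hx0, by simp; linarith, by ring⟩
    have hstar : d < pay (a, x, 1 - a - x) G d := by
      unfold pay
      have h1 : jointCDF G x x ≤ Lam x (1 - a - x) G := jointCDF_le_Lam G x _
      have : 0 < (a - d) * Lam x (1 - a - x) G := by
        apply mul_pos (by linarith)
        linarith
      simpa using this
    constructor
    · intro h s' hs'
      have hds : d ≤ pay s G d := le_of_lt (lt_of_lt_of_le hstar (h _ hsstar))
      rw [payHat_eq_max, payHat_eq_max]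
      exact max_le (le_trans (h s' hs') (le_max_left _ _)) (le_max_right _ _)
    · intro h s' hs'
      have h1 : pay (a, x, 1 - a - x) G d ≤ payHat s G d := by
        calc pay (a, x, 1 - a - x) G d ≤ payHat (a, x, 1 - a - x) G d := by
              rw [payHat_eq_max]; exact le_max_left _ _
          _ ≤ payHat s G d := h _ hsstar
      have h2 : d < payHat s G d := lt_of_lt_of_le hstar h1
      have h3 : payHat s G d = pay s G d := by
        rw [payHat_eq_max] at h2 ⊢
        rcases max_cases (pay s G d) d with ⟨he, _⟩ | ⟨he, _⟩
        · exact he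
        · rw [he] at h2; exact absurd h2 (lt_irrefl d)
      calc pay s' G d ≤ payHat s' G d := by rw [payHat_eq_max]; exact le_max_left _ _
        _ ≤ payHat s G d := h s' hs'
        _ = pay s G d := h3
end
end

section
/- Let (H_n) be Borel probability measures on ℝ² converging weakly to a Borel probability measure H, let (d_n) be reals converging to d ∈ ℝ, and let (s^n) be offers in S converging to s ∈ S. Then limsup_n π̂(s^n, H_n, d_n) ≤ π̂(s, H, d). -/
open MeasureTheory Filter

noncomputable section

theorem stmt9
    (Hn : ℕ → Measure (ℝ × ℝ)) (hHnprob : ∀ n, IsProbabilityMeasure (Hn n))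
    (H : Measure (ℝ × ℝ)) (hHprob : IsProbabilityMeasure H)
    (hweak : WeakLim Hn H)
    (dn : ℕ → ℝ) (d : ℝ) (hdn : Tendsto dn atTop (nhds d))
    (sn : ℕ → ℝ × ℝ × ℝ) (hsn : ∀ n, sn n ∈ SimplexS)
    (s : ℝ × ℝ × ℝ) (hs : s ∈ SimplexS)
    (hconv : Tendsto sn atTop (nhds s)) :
    limsup (fun n => payHat (sn n) (Hn n) (dn n)) atTop ≤ payHat s H d := by

  classical
  set b := s.2.1
  set c := s.2.2
  -- the closed sets F ε
  set F : ℝ → Set (ℝ × ℝ) := fun ε => {p : ℝ × ℝ | p.1 ≤ b + ε ∨ p.2 ≤ c + ε} with hF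
  have hFclosed : ∀ ε, IsClosed (F ε) := by
    intro ε
    exact (isClosed_le continuous_fst continuous_const).union
      (isClosed_le (continuous_snd) continuous_const)
  have hFmeas : ∀ ε, MeasurableSet (F ε) := fun ε => (hFclosed ε).measurableSet
  -- probability measures
  set P : ℕ → ProbabilityMeasure (ℝ × ℝ) := fun n => ⟨Hn n, hHnprob n⟩ with hP
  set Q : ProbabilityMeasure (ℝ × ℝ) := ⟨H, hHprob⟩ with hQ
  have hPQ : Tendsto P atTop (nhds Q) :=
    MeasureTheory.ProbabilityMeasure.tendsto_iff_forall_integral_tendsto.mpr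
      (fun f => hweak f)
  -- portmanteau: for closed sets
  have hport : ∀ ε : ℝ, limsup (fun n => Hn n (F ε)) atTop ≤ H (F ε) := by
    intro ε
    exact MeasureTheory.ProbabilityMeasure.limsup_measure_closed_le_of_tendsto hPQ (hFclosed ε)
  -- component convergences
  have h1 : Tendsto (fun n => (sn n).1) atTop (nhds s.1) :=
    (continuous_fst.tendsto s).comp hconv
  have h2 : Tendsto (fun n => (sn n).2.1) atTop (nhds b) :=
    ((continuous_fst.comp continuous_snd).tendsto s).comp hconv
  have h3 : Tendsto (fun n => (sn n).2.2) atTop (nhds c) :=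
    ((continuous_snd.comp continuous_snd).tendsto s).comp hconv
  have hmax : Tendsto (fun n => max ((sn n).1 - dn n) 0) atTop (nhds (max (s.1 - d) 0)) :=
    (h1.sub hdn).max tendsto_const_nhds
  -- lower coboundedness of the payoff sequence
  have hLamnonneg : ∀ n, 0 ≤ Lam (sn n).2.1 (sn n).2.2 (Hn n) := fun n => ENNReal.toReal_nonneg
  have hcob : IsCoboundedUnder (· ≤ ·) atTop (fun n => payHat (sn n) (Hn n) (dn n)) := by
    apply Filter.isCoboundedUnder_le_of_eventually_le (l := atTop) (x := d - 1)
    filter_upwards [hdn.eventually (eventually_gt_nhds (show d - 1 < d by linarith))] with n hn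
    have : 0 ≤ max ((sn n).1 - dn n) 0 * Lam (sn n).2.1 (sn n).2.2 (Hn n) :=
      mul_nonneg (le_max_right _ _) (hLamnonneg n)
    simp only [payHat]
    linarith
  -- Step 2 : for each ε > 0, a bound
  have key : ∀ ε : ℝ, 0 < ε →
      limsup (fun n => payHat (sn n) (Hn n) (dn n)) atTop ≤
        (d + ε) + (max (s.1 - d) 0 + ε) * ((H (F ε)).toReal + ε) := by
    intro ε hε
    apply Filter.limsup_le_of_le hcob
    have hHFne : H (F ε) ≠ ⊤ := measure_ne_top H _
    have hlt : limsup (fun n => Hn n (F ε)) atTop < H (F ε) + ENNReal.ofReal ε :=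
      lt_of_le_of_lt (hport ε)
        (ENNReal.lt_add_right hHFne (ENNReal.ofReal_pos.mpr hε).ne')
    have hev1 : ∀ᶠ n in atTop, Hn n (F ε) < H (F ε) + ENNReal.ofReal ε :=
      Filter.eventually_lt_of_limsup_lt hlt
    have hev2 : ∀ᶠ n in atTop, dn n < d + ε :=
      hdn.eventually_lt_const (by linarith)
    have hev3 : ∀ᶠ n in atTop, max ((sn n).1 - dn n) 0 < max (s.1 - d) 0 + ε :=
      hmax.eventually_lt_const (by linarith)
    have hev4 : ∀ᶠ n in atTop, (sn n).2.1 < b + ε := h2.eventually_lt_const (by linarith)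
    have hev5 : ∀ᶠ n in atTop, (sn n).2.2 < c + ε := h3.eventually_lt_const (by linarith)
    filter_upwards [hev1, hev2, hev3, hev4, hev5] with n e1 e2 e3 e4 e5
    have hsub : {p : ℝ × ℝ | p.1 ≤ (sn n).2.1 ∨ p.2 ≤ (sn n).2.2} ⊆ F ε := by
      intro p hp
      rcases hp with hp | hp
      · exact Or.inl (le_trans hp e4.le)
      · exact Or.inr (le_trans hp e5.le)
    have hLamle : Lam (sn n).2.1 (sn n).2.2 (Hn n) ≤ (H (F ε)).toReal + ε := by
      have hm : Hn n {p : ℝ × ℝ | p.1 ≤ (sn n).2.1 ∨ p.2 ≤ (sn n).2.2} ≤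
          H (F ε) + ENNReal.ofReal ε := le_trans (measure_mono hsub) e1.le
      have := ENNReal.toReal_mono (by finiteness) hm
      rwa [ENNReal.toReal_add hHFne ENNReal.ofReal_ne_top,
        ENNReal.toReal_ofReal hε.le] at this
    have hmul : max ((sn n).1 - dn n) 0 * Lam (sn n).2.1 (sn n).2.2 (Hn n) ≤
        (max (s.1 - d) 0 + ε) * ((H (F ε)).toReal + ε) := by
      apply mul_le_mul e3.le hLamle (hLamnonneg n)
      positivity
    simp only [payHat]
    linarith
  -- Step 3 : take ε = 1/(k+1) → 0
  set e : ℕ → ℝ := fun k => 1 / (k + 1 : ℝ) with he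
  have hepos : ∀ k, 0 < e k := fun k => by positivity
  have hetend : Tendsto e atTop (nhds 0) := tendsto_one_div_add_atTop_nhds_zero_nat
  -- continuity from above of the measure
  have hanti : Antitone (fun k : ℕ => F (e k)) := by
    intro k l hkl p hp
    have hkl' : e l ≤ e k := by
      apply one_div_le_one_div_of_le (by positivity)
      exact_mod_cast Nat.add_le_add_right hkl 1
    rcases hp with hp | hp
    · exact Or.inl (le_trans hp (by linarith))
    · exact Or.inr (le_trans hp (by linarith))
  have hiInter : (⋂ k, F (e k)) = {p : ℝ × ℝ | p.1 ≤ b ∨ p.2 ≤ c} := by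
    ext p
    simp only [Set.mem_iInter, hF, Set.mem_setOf_eq]
    constructor
    · intro h
      by_contra hcon
      push_neg at hcon
      obtain ⟨hb, hc⟩ := hcon
      obtain ⟨k, hk⟩ := exists_nat_one_div_lt (lt_min (sub_pos.mpr hb) (sub_pos.mpr hc))
      rcases h k with h' | h'
      · have := lt_of_lt_of_le hk (min_le_left _ _)
        simp only [e] at h'
        linarith
      · have := lt_of_lt_of_le hk (min_le_right _ _)
        simp only [e] at h'
        linarith
    · rintro (h | h) k
      · exact Or.inl (le_trans h (by linarith [(hepos k).le]))
      · exact Or.inr (le_trans h (by linarith [(hepos k).le]))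
  have hmeastend : Tendsto (fun k => (H (F (e k))).toReal) atTop
      (nhds (Lam b c H)) := by
    have h0 : Tendsto (fun k => H (F (e k))) atTop
        (nhds (H (⋂ k, F (e k)))) :=
      tendsto_measure_iInter_atTop (fun k => (hFmeas (e k)).nullMeasurableSet) hanti
        ⟨0, measure_ne_top H _⟩
    rw [hiInter] at h0
    exact (ENNReal.tendsto_toReal (measure_ne_top H _)).comp h0
  -- combine
  have hg : Tendsto (fun k => (d + e k) + (max (s.1 - d) 0 + e k) *
      ((H (F (e k))).toReal + e k)) atTop (nhds (payHat s H d)) := by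
    have h' : Tendsto (fun k => (d + e k) + (max (s.1 - d) 0 + e k) *
        ((H (F (e k))).toReal + e k)) atTop
        (nhds ((d + 0) + (max (s.1 - d) 0 + 0) * (Lam b c H + 0))) :=
      (tendsto_const_nhds.add hetend).add
        ((tendsto_const_nhds.add hetend).mul (hmeastend.add hetend))
    simpa [payHat] using h' 
  exact ge_of_tendsto' hg (fun k => key (e k) (hepos k))
end
end

section
/- Fix d ∈ [0, 1), let (H_n) be Borel probability measures on ℝ² converging weakly to H, and let (d_n) be reals converging to d. If for each n the offer s^n ∈ S maximizes π̂(·, H_n, d_n) over S, and s^n converges to some s ∈ S, then s maximizes π̂(·, H, d) over S; that is, the argmax correspondence is upper hemicontinuous at (H, d). -/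
open MeasureTheory Filter

noncomputable section

/-! Since the marginals of `H` have no atoms, the boundary of every acceptance set
`{τ_B ≤ b ∨ τ_C ≤ c}` is `H`-null, so by the portmanteau theorem `Λ(b, c, H_n) → Λ(b, c, H)`
and hence `π̂(s', H_n, d_n) → π̂(s', H, d)`. Once `s^n` is within `ε` of `s`, monotonicity of `Λ`
gives `π̂(s', H_n, d_n) ≤ π̂(s^n, H_n, d_n) ≤ d_n + max(s^n_A - d_n, 0) Λ(s_B + ε, s_C + ε, H_n)`,
whose limit is `d + max(s_A - d, 0) Λ(s_B + ε, s_C + ε, H)`. Letting `ε ↓ 0`, continuity of `H`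
from above yields `π̂(s', H, d) ≤ π̂(s, H, d)`. -/

open Topology Set

def acceptSet (b c : ℝ) : Set (ℝ × ℝ) := {p | p.1 ≤ b ∨ p.2 ≤ c}

lemma measurableSet_acceptSet (b c : ℝ) : MeasurableSet (acceptSet b c) :=
  (measurable_fst measurableSet_Iic).union (measurable_snd measurableSet_Iic)

lemma frontier_acceptSet_subset (b c : ℝ) :
    frontier (acceptSet b c) ⊆ Prod.fst ⁻¹' {b} ∪ Prod.snd ⁻¹' {c} :=
  (frontier_union_subset {p : ℝ × ℝ | p.1 ≤ b} {p | p.2 ≤ c}).trans <| union_subset_union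
    ((inter_subset_left).trans (frontier_le_subset_eq continuous_fst continuous_const))
    ((inter_subset_right).trans (frontier_le_subset_eq continuous_snd continuous_const))

lemma measure_frontier_acceptSet_eq_zero (μ : Measure (ℝ × ℝ))
    [NullSingletonClass (μ.map Prod.fst)] [NullSingletonClass (μ.map Prod.snd)] (b c : ℝ) :
    μ (frontier (acceptSet b c)) = 0 := by
  refine measure_mono_null (frontier_acceptSet_subset b c) (measure_union_null ?_ ?_)
  · rw [← Measure.map_apply measurable_fst (measurableSet_singleton b)]
    exact measure_singleton b
  · rw [← Measure.map_apply measurable_snd (measurableSet_singleton c)]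
    exact measure_singleton c

instance uniformIcc.instNullSingletonClass (τ : ℝ) : NullSingletonClass (uniformIcc τ) :=
  ⟨fun x => by simp [uniformIcc]⟩

lemma WeakLim.tendsto_measureReal {Hn : ℕ → Measure (ℝ × ℝ)} {H : Measure (ℝ × ℝ)}
    [∀ n, IsProbabilityMeasure (Hn n)] [IsProbabilityMeasure H] (hweak : WeakLim Hn H)
    {E : Set (ℝ × ℝ)} (hE : H (frontier E) = 0) :
    Tendsto (fun n => (Hn n E).toReal) atTop (𝓝 (H E).toReal) := by
  let P : ProbabilityMeasure (ℝ × ℝ) := ⟨H, inferInstance⟩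
  let Pn : ℕ → ProbabilityMeasure (ℝ × ℝ) := fun n => ⟨Hn n, inferInstance⟩
  have hP : Tendsto Pn atTop (𝓝 P) :=
    ProbabilityMeasure.tendsto_iff_forall_integral_tendsto.mpr hweak
  exact (ENNReal.tendsto_toReal (measure_ne_top H E)).comp
    (ProbabilityMeasure.tendsto_measure_of_null_frontier_of_tendsto' hP hE)

lemma WeakLim.tendsto_Lam {Hn : ℕ → Measure (ℝ × ℝ)} {H : Measure (ℝ × ℝ)}
    [∀ n, IsProbabilityMeasure (Hn n)] [IsProbabilityMeasure H] (hweak : WeakLim Hn H)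
    {b c : ℝ} (hbc : H (frontier (acceptSet b c)) = 0) :
    Tendsto (fun n => Lam b c (Hn n)) atTop (𝓝 (Lam b c H)) :=
  hweak.tendsto_measureReal hbc

lemma Lam_mono (G : Measure (ℝ × ℝ)) [IsFiniteMeasure G] {b b' c c' : ℝ}
    (hb : b ≤ b') (hc : c ≤ c') : Lam b c G ≤ Lam b' c' G :=
  ENNReal.toReal_mono (measure_ne_top G _) <| measure_mono fun _ hp =>
    hp.imp (fun h => h.trans hb) (fun h => h.trans hc)

lemma tendsto_Lam_add_nhdsGT (G : Measure (ℝ × ℝ)) [IsFiniteMeasure G] (b c : ℝ) :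
    Tendsto (fun ε => Lam (b + ε) (c + ε) G) (𝓝[>] 0) (𝓝 (Lam b c G)) := by
  have hinter : ⋂ ε > (0 : ℝ), acceptSet (b + ε) (c + ε) = acceptSet b c := by
    ext p
    simp only [mem_iInter, acceptSet, mem_ofPred_eq]
    refine ⟨fun h => ?_, fun h ε hε => h.imp (fun h => by linarith) (fun h => by linarith)⟩
    by_contra! hp
    have hδ : 0 < min (p.1 - b) (p.2 - c) := lt_min (by linarith) (by linarith)
    rcases h _ (half_pos hδ) with h | h
    · linarith [min_le_left (p.1 - b) (p.2 - c)]
    · linarith [min_le_right (p.1 - b) (p.2 - c)]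
  have h := tendsto_measure_biInter_gt (μ := G) (s := fun ε => acceptSet (b + ε) (c + ε))
    (fun ε _ => (measurableSet_acceptSet _ _).nullMeasurableSet)
    (fun i j _ hij _ hp => hp.imp (fun h => h.trans (by linarith)) (fun h => h.trans (by linarith)))
    ⟨1, one_pos, measure_ne_top G _⟩
  rw [hinter] at h
  exact (ENNReal.tendsto_toReal (measure_ne_top G _)).comp h

lemma eventually_payHat_le_of_tendsto {Gn : ℕ → Measure (ℝ × ℝ)} [∀ n, IsFiniteMeasure (Gn n)]
    (dn : ℕ → ℝ) {sn : ℕ → ℝ × ℝ × ℝ} {s : ℝ × ℝ × ℝ} (hconv : Tendsto sn atTop (𝓝 s))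
    {ε : ℝ} (hε : 0 < ε) :
    ∀ᶠ n in atTop, payHat (sn n) (Gn n) (dn n) ≤
      dn n + max ((sn n).1 - dn n) 0 * Lam (s.2.1 + ε) (s.2.2 + ε) (Gn n) := by
  have hb := hconv.snd_nhds.fst_nhds.eventually (eventually_le_nhds (lt_add_of_pos_right s.2.1 hε))
  have hc := hconv.snd_nhds.snd_nhds.eventually (eventually_le_nhds (lt_add_of_pos_right s.2.2 hε))
  filter_upwards [hb, hc] with n hbn hcn
  exact add_le_add_right (mul_le_mul_of_nonneg_left (Lam_mono (Gn n) hbn hcn) (le_max_right _ _)) _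

theorem stmt12_general
    (τ : ℝ)
    (H : Measure (ℝ × ℝ)) (hHprob : IsProbabilityMeasure H)
    (hmarg1 : H.map Prod.fst = uniformIcc τ)
    (hmarg2 : H.map Prod.snd = uniformIcc τ)
    (d : ℝ)
    (Hn : ℕ → Measure (ℝ × ℝ)) (hHnprob : ∀ n, IsProbabilityMeasure (Hn n))
    (hweak : WeakLim Hn H)
    (dn : ℕ → ℝ) (hdn : Tendsto dn atTop (nhds d))
    (sn : ℕ → ℝ × ℝ × ℝ)
    (hmax : ∀ n, ∀ s' ∈ SimplexS, payHat s' (Hn n) (dn n) ≤ payHat (sn n) (Hn n) (dn n))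
    (s : ℝ × ℝ × ℝ)
    (hconv : Tendsto sn atTop (nhds s)) :
    ∀ s' ∈ SimplexS, payHat s' H d ≤ payHat s H d := by
  intro s' hs'
  have := hHprob
  have := hHnprob
  have : NullSingletonClass (H.map Prod.fst) := by rw [hmarg1]; infer_instance
  have : NullSingletonClass (H.map Prod.snd) := by rw [hmarg2]; infer_instance
  have hLam (b c : ℝ) := hweak.tendsto_Lam (measure_frontier_acceptSet_eq_zero H b c)
  have hA : Tendsto (fun n => max ((sn n).1 - dn n) 0) atTop (𝓝 (max (s.1 - d) 0)) :=
    (hconv.fst_nhds.sub hdn).max tendsto_const_nhds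
  have hbound : ∀ ε > 0, payHat s' H d ≤ d + max (s.1 - d) 0 * Lam (s.2.1 + ε) (s.2.2 + ε) H := by
    intro ε hε
    refine le_of_tendsto_of_tendsto
      (hdn.add (((tendsto_const_nhds.sub hdn).max tendsto_const_nhds).mul (hLam _ _)))
      (hdn.add (hA.mul (hLam _ _))) ?_
    filter_upwards [eventually_payHat_le_of_tendsto (Gn := Hn) dn hconv hε] with n hn
    exact (hmax n s' hs').trans hn
  exact ge_of_tendsto (tendsto_const_nhds.add (tendsto_const_nhds.mul
    (tendsto_Lam_add_nhdsGT H s.2.1 s.2.2))) (eventually_nhdsWithin_of_forall hbound)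

theorem stmt12
    (τ : ℝ) (hτ : 1 / 2 ≤ τ)
    (H : Measure (ℝ × ℝ)) (hHprob : IsProbabilityMeasure H)
    (hconc : H ((Set.Icc (0 : ℝ) τ ×ˢ Set.Icc (0 : ℝ) τ)ᶜ) = 0)
    (hmarg1 : H.map Prod.fst = uniformIcc τ)
    (hmarg2 : H.map Prod.snd = uniformIcc τ)
    (hA1 : ∀ x > (0 : ℝ), 0 < jointCDF H x x)
    (d : ℝ) (hd0 : 0 ≤ d) (hd1 : d < 1)
    (Hn : ℕ → Measure (ℝ × ℝ)) (hHnprob : ∀ n, IsProbabilityMeasure (Hn n))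
    (hweak : WeakLim Hn H)
    (dn : ℕ → ℝ) (hdn : Tendsto dn atTop (nhds d))
    (sn : ℕ → ℝ × ℝ × ℝ) (hsn : ∀ n, sn n ∈ SimplexS)
    (hmax : ∀ n, ∀ s' ∈ SimplexS, payHat s' (Hn n) (dn n) ≤ payHat (sn n) (Hn n) (dn n))
    (s : ℝ × ℝ × ℝ) (hs : s ∈ SimplexS)
    (hconv : Tendsto sn atTop (nhds s)) :
    ∀ s' ∈ SimplexS, payHat s' H d ≤ payHat s H d :=
  stmt12_general τ H hHprob hmarg1 hmarg2 d Hn hHnprob hweak dn hdn sn hmax s hconv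
end
end

section
/- If s_B > 0, s_C > 0, and s_B + s_C ≤ τ̄, then consolidating the two shares onto one non-proposer strictly raises the acceptance probability: Λ(s_B + s_C, 0, H) > Λ(s_B, s_C, H). In particular, Λ(s_B + s_C, 0, H) = (s_B + s_C)/τ̄ while Λ(s_B, s_C, H) = s_B/τ̄ + s_C/τ̄ − H(s_B, s_C) with H(s_B, s_C) > 0. -/
open MeasureTheory Filter

noncomputable section

theorem stmt13
    (τ : ℝ) (hτ : 1 / 2 ≤ τ)
    (H : Measure (ℝ × ℝ)) (hHprob : IsProbabilityMeasure H)
    (hconc : H ((Set.Icc (0 : ℝ) τ ×ˢ Set.Icc (0 : ℝ) τ)ᶜ) = 0)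
    (hmarg1 : H.map Prod.fst = uniformIcc τ)
    (hmarg2 : H.map Prod.snd = uniformIcc τ)
    (hA1 : ∀ x > (0 : ℝ), 0 < jointCDF H x x)
    (sB sC : ℝ) (hB : 0 < sB) (hC : 0 < sC) (hsum : sB + sC ≤ τ) :
    Lam sB sC H < Lam (sB + sC) 0 H ∧
    Lam (sB + sC) 0 H = (sB + sC) / τ ∧
    Lam sB sC H = sB / τ + sC / τ - jointCDF H sB sC ∧
    0 < jointCDF H sB sC := by
  have hτ0 : (0:ℝ) < τ := by linarith
  have hfst : ∀ x : ℝ, H {p : ℝ × ℝ | p.1 ≤ x} = uniformIcc τ (Set.Iic x) := by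
    intro x
    rw [← hmarg1, Measure.map_apply measurable_fst measurableSet_Iic]
    rfl
  have hsnd : ∀ x : ℝ, H {p : ℝ × ℝ | p.2 ≤ x} = uniformIcc τ (Set.Iic x) := by
    intro x
    rw [← hmarg2, Measure.map_apply measurable_snd measurableSet_Iic]
    rfl
  have huni : ∀ x : ℝ, 0 ≤ x → x ≤ τ → uniformIcc τ (Set.Iic x) = ENNReal.ofReal (x / τ) := by
    intro x hx hxτ
    unfold uniformIcc
    rw [Measure.smul_apply, Measure.restrict_apply measurableSet_Iic]
    have hset : Set.Iic x ∩ Set.Icc 0 τ = Set.Icc 0 x := by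
      ext p
      simp only [Set.mem_inter_iff, Set.mem_Iic, Set.mem_Icc]
      constructor
      · rintro ⟨h1, h2, _⟩; exact ⟨h2, h1⟩
      · rintro ⟨h1, h2⟩; exact ⟨h2, h1, le_trans h2 hxτ⟩
    rw [hset, Real.volume_Icc, smul_eq_mul, ENNReal.ofReal_div_of_pos hτ0,
      div_eq_mul_inv, mul_comm, sub_zero]
  have hJpos : 0 < jointCDF H sB sC := by
    have hm := hA1 (min sB sC) (lt_min hB hC)
    refine lt_of_lt_of_le hm ?_
    unfold jointCDF
    refine ENNReal.toReal_mono (measure_ne_top _ _) (measure_mono ?_)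
    exact Set.prod_mono (Set.Iic_subset_Iic.mpr (min_le_left _ _))
      (Set.Iic_subset_Iic.mpr (min_le_right _ _))
  have hLam2 : Lam (sB + sC) 0 H = (sB + sC) / τ := by
    have hnull : H {p : ℝ × ℝ | p.2 ≤ 0} = 0 := by
      rw [hsnd 0, huni 0 le_rfl hτ0.le]
      simp
    have hun : {p : ℝ × ℝ | p.1 ≤ sB + sC ∨ p.2 ≤ 0}
        = {p : ℝ × ℝ | p.1 ≤ sB + sC} ∪ {p : ℝ × ℝ | p.2 ≤ 0} := rfl
    have hkey : H ({p : ℝ × ℝ | p.1 ≤ sB + sC} ∪ {p : ℝ × ℝ | p.2 ≤ 0})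
        = H {p : ℝ × ℝ | p.1 ≤ sB + sC} := by
      refine le_antisymm ?_ (measure_mono Set.subset_union_left)
      calc H ({p : ℝ × ℝ | p.1 ≤ sB + sC} ∪ {p : ℝ × ℝ | p.2 ≤ 0})
          ≤ H {p : ℝ × ℝ | p.1 ≤ sB + sC} + H {p : ℝ × ℝ | p.2 ≤ 0} := measure_union_le _ _
        _ = H {p : ℝ × ℝ | p.1 ≤ sB + sC} := by rw [hnull, add_zero]
    unfold Lam
    rw [hun, hkey, hfst, huni _ (by linarith) hsum,
      ENNReal.toReal_ofReal (by positivity)]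
  have hmeasB : MeasurableSet {p : ℝ × ℝ | p.2 ≤ sC} :=
    measurableSet_Iic.preimage measurable_snd
  have hLam1 : Lam sB sC H = sB / τ + sC / τ - jointCDF H sB sC := by
    have hie := measure_union_add_inter (μ := H) {p : ℝ × ℝ | p.1 ≤ sB} hmeasB
    have hinter : {p : ℝ × ℝ | p.1 ≤ sB} ∩ {p : ℝ × ℝ | p.2 ≤ sC}
        = Set.Iic sB ×ˢ Set.Iic sC := by
      ext p
      simp [Set.mem_prod, Prod.le_def]
    have hun : {p : ℝ × ℝ | p.1 ≤ sB ∨ p.2 ≤ sC}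
        = {p : ℝ × ℝ | p.1 ≤ sB} ∪ {p : ℝ × ℝ | p.2 ≤ sC} := rfl
    rw [hinter] at hie
    have h1 : H {p : ℝ × ℝ | p.1 ≤ sB} = ENNReal.ofReal (sB / τ) := by
      rw [hfst, huni _ hB.le (by linarith)]
    have h2 : H {p : ℝ × ℝ | p.2 ≤ sC} = ENNReal.ofReal (sC / τ) := by
      rw [hsnd, huni _ hC.le (by linarith)]
    rw [h1, h2] at hie
    have htr := congrArg ENNReal.toReal hie
    rw [ENNReal.toReal_add (measure_ne_top _ _) (measure_ne_top _ _),
      ENNReal.toReal_add (by simp) (by simp),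
      ENNReal.toReal_ofReal (by positivity), ENNReal.toReal_ofReal (by positivity)] at htr
    unfold Lam jointCDF
    rw [hun]
    linarith
  refine ⟨?_, hLam2, hLam1, hJpos⟩
  rw [hLam1, hLam2, add_div]
  linarith
end
end

section
/- Let μ be the law on ℝ² of (U, 1 − U), where U is uniformly distributed on [0, 1] (perfectly negatively correlated thresholds). Then for every offer s ∈ S one has π(s, μ, 0) = (1 − s_B − s_C)·(s_B + s_C), the maximum of π(·, μ, 0) over S equals 1/4, and the set of maximizers is exactly {s ∈ S : s_B + s_C = 1/2}; in particular both the minimal-winning-coalition offer (1/2, 1/2, 0) and the grand-coalition offer (1/2, 1/4, 1/4) are optimal. -/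
open MeasureTheory Filter

noncomputable section

lemma lam_eq (b c : ℝ) (hb : 0 ≤ b) (hc : 0 ≤ c) (hbc : b + c ≤ 1) :
    Lam b c (Measure.map (fun u : ℝ => (u, 1 - u)) (volume.restrict (Set.Icc (0 : ℝ) 1)))
      = b + c := by
  have hf : Measurable (fun u : ℝ => (u, 1 - u)) :=
    measurable_id.prodMk (measurable_const.sub measurable_id)
  have hS : MeasurableSet {p : ℝ × ℝ | p.1 ≤ b ∨ p.2 ≤ c} :=
    (measurableSet_le measurable_fst measurable_const).union
      (measurableSet_le measurable_snd measurable_const)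
  rw [Lam, Measure.map_apply hf hS]
  have hpre : (fun u : ℝ => (u, 1 - u)) ⁻¹' {p : ℝ × ℝ | p.1 ≤ b ∨ p.2 ≤ c}
      = Set.Iic b ∪ Set.Ici (1 - c) := by
    ext u
    simp only [Set.mem_preimage, Set.mem_setOf_eq, Set.mem_union, Set.mem_Iic, Set.mem_Ici]
    constructor <;> rintro (h | h)
    · exact Or.inl h
    · exact Or.inr (by linarith)
    · exact Or.inl h
    · exact Or.inr (by linarith)
  rw [hpre, Measure.restrict_apply ((measurableSet_Iic).union measurableSet_Ici)]
  have hset : (Set.Iic b ∪ Set.Ici (1 - c)) ∩ Set.Icc 0 1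
      = Set.Icc (0:ℝ) 1 \ Set.Ioo b (1 - c) := by
    ext x
    simp only [Set.mem_inter_iff, Set.mem_union, Set.mem_Iic, Set.mem_Ici, Set.mem_Icc,
      Set.mem_diff, Set.mem_Ioo, not_and, not_lt]
    constructor
    · rintro ⟨h1, h2⟩
      exact ⟨h2, fun hx => by rcases h1 with h | h <;> linarith⟩
    · rintro ⟨h2, hn⟩
      refine ⟨?_, h2⟩
      by_cases hx : b < x
      · exact Or.inr (hn hx)
      · exact Or.inl (le_of_not_gt hx)
  rw [hset, measure_diff (by
      intro x hx
      simp only [Set.mem_Ioo] at hx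
      exact Set.mem_Icc.2 ⟨by linarith [hx.1], by linarith [hx.2]⟩)
    measurableSet_Ioo.nullMeasurableSet (by simp [Real.volume_Ioo])]
  rw [Real.volume_Icc, Real.volume_Ioo]
  rw [show (1:ℝ) - 0 = 1 by ring]
  rw [← ENNReal.ofReal_sub _ (by linarith)]
  rw [show (1:ℝ) - (1 - c - b) = b + c by ring]
  exact ENNReal.toReal_ofReal (by linarith)

theorem stmt15
    (μ : Measure (ℝ × ℝ))
    (hμ : μ = Measure.map (fun u : ℝ => (u, 1 - u)) (volume.restrict (Set.Icc (0 : ℝ) 1))) :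
    (∀ s ∈ SimplexS, pay s μ 0 = (1 - s.2.1 - s.2.2) * (s.2.1 + s.2.2)) ∧
    IsGreatest ((fun s => pay s μ 0) '' SimplexS) (1 / 4) ∧
    {s : ℝ × ℝ × ℝ | s ∈ SimplexS ∧ ∀ s' ∈ SimplexS, pay s' μ 0 ≤ pay s μ 0} =
      {s : ℝ × ℝ × ℝ | s ∈ SimplexS ∧ s.2.1 + s.2.2 = 1 / 2} ∧
    (((1 : ℝ) / 2, (1 : ℝ) / 2, (0 : ℝ)) ∈
      {s : ℝ × ℝ × ℝ | s ∈ SimplexS ∧ ∀ s' ∈ SimplexS, pay s' μ 0 ≤ pay s μ 0}) ∧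
    (((1 : ℝ) / 2, (1 : ℝ) / 4, (1 : ℝ) / 4) ∈
      {s : ℝ × ℝ × ℝ | s ∈ SimplexS ∧ ∀ s' ∈ SimplexS, pay s' μ 0 ≤ pay s μ 0}) := by
  
  subst hμ
  set ν := Measure.map (fun u : ℝ => (u, 1 - u)) (volume.restrict (Set.Icc (0 : ℝ) 1))
  have hpay : ∀ s ∈ SimplexS, pay s ν 0 = (1 - s.2.1 - s.2.2) * (s.2.1 + s.2.2) := by
    rintro ⟨a, b, c⟩ ⟨ha, hb, hc, hsum⟩
    simp only at *
    rw [pay, lam_eq b c hb hc (by linarith)]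
    ring_nf
    nlinarith [hsum]
  have hmax : ∀ s ∈ SimplexS, pay s ν 0 ≤ 1 / 4 := by
    intro s hs
    rw [hpay s hs]
    nlinarith [sq_nonneg (s.2.1 + s.2.2 - 1/2)]
  have hmem1 : ((1:ℝ)/2, (1:ℝ)/2, (0:ℝ)) ∈ SimplexS := by
    refine ⟨by norm_num, by norm_num, le_refl _, by norm_num⟩
  have hmem2 : ((1:ℝ)/2, (1:ℝ)/4, (1:ℝ)/4) ∈ SimplexS := by
    refine ⟨by norm_num, by norm_num, by norm_num, by norm_num⟩
  have hval1 : pay ((1:ℝ)/2, (1:ℝ)/2, (0:ℝ)) ν 0 = 1 / 4 := by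
    rw [hpay _ hmem1]; norm_num
  have hval2 : pay ((1:ℝ)/2, (1:ℝ)/4, (1:ℝ)/4) ν 0 = 1 / 4 := by
    rw [hpay _ hmem2]; norm_num
  refine ⟨hpay, ⟨⟨_, hmem1, hval1⟩, ?_⟩, ?_, ⟨hmem1, ?_⟩, ⟨hmem2, ?_⟩⟩
  · rintro x ⟨s, hs, rfl⟩
    exact hmax s hs
  · ext s
    simp only [Set.mem_setOf_eq]
    constructor
    · rintro ⟨hs, hopt⟩
      refine ⟨hs, ?_⟩
      have h1 : (1:ℝ) / 4 ≤ pay s ν 0 := hval1 ▸ hopt _ hmem1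
      have h2 := hpay s hs
      nlinarith [h1, h2]
    · rintro ⟨hs, heq⟩
      refine ⟨hs, fun s' hs' => ?_⟩
      have : pay s ν 0 = 1 / 4 := by
        rw [hpay s hs]; linear_combination (1/2 - s.2.1 - s.2.2) * heq
      rw [this]
      exact hmax s' hs'
  · intro s' hs'; rw [hval1]; exact hmax s' hs'
  · intro s' hs'; rw [hval2]; exact hmax s' hs'
end
end
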